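/- arXiv:1301.4949 — 2 statements merged into one kernel-verified Lean document; each statement's English description precedes it below -/
import Mathlib

section
/- Let W ⊆ V be a nice space and let w ∈ W∖{0}. If mcc(R(w)) lies in the intrinsic interior of the convex hull of R(w), then there exists X ∈ 𝔞 such that w̃ = exp(π(X))w satisfies m_𝔤(w̃) = mcc(R(w)) and π(m_𝔤(w̃))w̃ = ‖mcc(R(w))‖² w̃; in particular, the orbit of w contains a critical point of the norm squared of the moment map, i.e., the orbit is distinguished. -/
open scoped InnerProductSpace
open Finset
open scoped Classical

/-- The (restricted) moment map of a linear family of operators `π` on an inner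
product space `V`: `momentMap π v` is the unique element of `E` with
`⟪momentMap π v, Y⟫ = ⟪π Y v, v⟫ / ‖v‖²` for all `Y`. -/
noncomputable def momentMap {E V : Type*} [NormedAddCommGroup E] [InnerProductSpace ℝ E]
    [FiniteDimensional ℝ E] [NormedAddCommGroup V] [InnerProductSpace ℝ V]
    (π : E →ₗ[ℝ] V →L[ℝ] V) (v : V) : E :=
  (InnerProductSpace.toDual ℝ E).symm <| LinearMap.toContinuousLinearMap
    { toFun := fun X => ⟪(π X) v, v⟫_ℝ / ‖v‖ ^ 2
      map_add' := fun X Y => by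
        simp [map_add, ContinuousLinearMap.add_apply, inner_add_left, add_div]
      map_smul' := fun c X => by
        simp [map_smul, ContinuousLinearMap.smul_apply, inner_smul_left, mul_div_assoc] }

/-- The weight space `V_α = {v : ∀ X ∈ 𝔞, π(X)v = ⟪α,X⟫v}`. -/
def wtSpace {E V : Type*} [NormedAddCommGroup E] [InnerProductSpace ℝ E]
    [NormedAddCommGroup V] [InnerProductSpace ℝ V]
    (π : E →ₗ[ℝ] V →L[ℝ] V) (𝔞 : Submodule ℝ E) (α : E) : Submodule ℝ V where
  carrier := {v | ∀ X ∈ 𝔞, (π X) v = ⟪α, X⟫_ℝ • v}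
  add_mem' := fun {a b} ha hb X hX => by rw [map_add, ha X hX, hb X hX, smul_add]
  zero_mem' := fun X hX => by simp
  smul_mem' := fun t a ha X hX => by rw [map_smul, ha X hX, smul_comm]

/-- The (restricted) root space `𝔤_γ = {Y : ∀ X ∈ 𝔞, [X,Y] = ⟪γ,X⟫Y}`. -/
def rootSpace {E : Type*} [NormedAddCommGroup E] [InnerProductSpace ℝ E]
    (bk : E →ₗ[ℝ] E →ₗ[ℝ] E) (𝔞 : Submodule ℝ E) (γ : E) : Submodule ℝ E where
  carrier := {Y | ∀ X ∈ 𝔞, bk X Y = ⟪γ, X⟫_ℝ • Y}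
  add_mem' := fun {a b} ha hb X hX => by rw [map_add, ha X hX, hb X hX, smul_add]
  zero_mem' := fun X hX => by simp
  smul_mem' := fun t a ha X hX => by rw [map_smul, ha X hX, smul_comm]

/-- A subspace `W ⊆ V` is `A`-invariant if `π(X)W ⊆ W` for all `X ∈ 𝔞`. -/
def AInvariant {E V : Type*} [NormedAddCommGroup E] [InnerProductSpace ℝ E]
    [NormedAddCommGroup V] [InnerProductSpace ℝ V]
    (π : E →ₗ[ℝ] V →L[ℝ] V) (𝔞 : Submodule ℝ E) (W : Submodule ℝ V) : Prop :=
  ∀ X ∈ 𝔞, ∀ w ∈ W, (π X) w ∈ W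

/-- An `A`-invariant subspace `W ⊆ V` is a nice space if `momentMap π w ∈ 𝔞` for
every nonzero `w ∈ W`. -/
def IsNiceSpace {E V : Type*} [NormedAddCommGroup E] [InnerProductSpace ℝ E]
    [FiniteDimensional ℝ E] [NormedAddCommGroup V] [InnerProductSpace ℝ V]
    (π : E →ₗ[ℝ] V →L[ℝ] V) (𝔞 : Submodule ℝ E) (W : Submodule ℝ V) : Prop :=
  AInvariant π 𝔞 W ∧ ∀ w ∈ W, w ≠ 0 → momentMap π w ∈ 𝔞

/-!
Write `w = ∑ w_α` in weight components. For `X ∈ 𝔞` we have `exp(π X) w = ∑ e^⟪α, X⟫ w_α`,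
and since `W` is nice the moment map of this vector is the barycentre of `R(w)` with masses
`‖w_α‖² e^(2⟪α, X⟫)`. As `mcc` lies in the relative interior of the hull of `R(w)`, the convex
function `X ↦ ∑ ‖w_α‖² e^⟪α - mcc, X⟫` is coercive on the direction of the affine span of
`R(w)`; at a minimum its gradient vanishes, which says that this barycentre is `mcc`.
Finally, a point of minimal norm in the relative interior of a convex set is orthogonal to its
affine span, so `⟪α, mcc⟫ = ‖mcc‖²` for `α ∈ R(w)`, which is the eigenvalue equation.
-/

open Filter Topology

section ConvexGeometry

variable {E : Type*} [NormedAddCommGroup E] [InnerProductSpace ℝ E]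

lemma eventually_add_smul_mem_of_mem_intrinsicInterior {s : Set E} {m X : E}
    (hm : m ∈ intrinsicInterior ℝ s) (hX : X ∈ (affineSpan ℝ s).direction) :
    ∀ᶠ t : ℝ in 𝓝 0, m + t • X ∈ s := by
  obtain ⟨y, hy, rfl⟩ := hm
  have hline : ∀ t : ℝ, (y : E) + t • X ∈ affineSpan ℝ s := fun t => by
    simpa [vadd_eq_add, add_comm] using
      AffineSubspace.vadd_mem_of_mem_direction ((affineSpan ℝ s).direction.smul_mem t hX) y.2
  have hcont : Continuous fun t : ℝ => (⟨(y : E) + t • X, hline t⟩ : affineSpan ℝ s) := by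
    fun_prop
  have h0 : (⟨(y : E) + (0 : ℝ) • X, hline 0⟩ : affineSpan ℝ s) = y := by ext; simp
  exact hcont.continuousAt.preimage_mem_nhds (h0 ▸ mem_interior_iff_mem_nhds.1 hy)

lemma inner_sub_eq_zero_of_mem_intrinsicInterior_of_forall_norm_le {s : Set E}
    (hs : Convex ℝ s) {m : E} (hm : m ∈ intrinsicInterior ℝ s) (hmin : ∀ y ∈ s, ‖m‖ ≤ ‖y‖)
    {y : E} (hy : y ∈ s) : ⟪y - m, m⟫_ℝ = 0 := by
  have hms : m ∈ s := intrinsicInterior_subset hm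
  have : Nonempty s := ⟨⟨m, hms⟩⟩
  have hproj : ‖0 - m‖ = ⨅ z : s, ‖0 - (z : E)‖ :=
    le_antisymm (le_ciInf fun z => by simpa using hmin z z.2)
      (ciInf_le (f := fun z : s => ‖0 - (z : E)‖)
        ⟨0, Set.forall_mem_range.2 fun _ => norm_nonneg _⟩ ⟨m, hms⟩)
  have hvar : ∀ z ∈ s, 0 ≤ ⟪z - m, m⟫_ℝ := fun z hz => by
    have := (norm_eq_iInf_iff_real_inner_le_zero hs hms).1 hproj z hz
    rwa [zero_sub, inner_neg_left, neg_nonpos, real_inner_comm] at this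
  have hdir : y - m ∈ (affineSpan ℝ s).direction :=
    AffineSubspace.vsub_mem_direction (subset_affineSpan ℝ s hy)
      (subset_affineSpan ℝ s hms)
  obtain ⟨t, hts, ht⟩ := ((eventually_add_smul_mem_of_mem_intrinsicInterior hm hdir).filter_mono
    nhdsWithin_le_nhds |>.and (self_mem_nhdsWithin (s := Set.Iio 0))).exists
  have := hvar _ hts
  rw [add_sub_cancel_left, real_inner_smul_left] at this
  exact le_antisymm (nonpos_of_mul_nonneg_right this ht) (hvar y hy)

lemma exists_inner_sub_pos_of_mem_intrinsicInterior_convexHull {s : Set E} {m X : E}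
    (hm : m ∈ intrinsicInterior ℝ (convexHull ℝ s)) (hX : X ∈ vectorSpan ℝ s) (hX0 : X ≠ 0) :
    ∃ y ∈ s, 0 < ⟪y - m, X⟫_ℝ := by
  rw [← direction_affineSpan, ← affineSpan_convexHull] at hX
  obtain ⟨t, hts, ht⟩ := ((eventually_add_smul_mem_of_mem_intrinsicInterior hm hX).filter_mono
    nhdsWithin_le_nhds |>.and (self_mem_nhdsWithin (s := Set.Ioi 0))).exists
  by_contra! hle
  have hhalf : convexHull ℝ s ⊆ {z | ⟪z, X⟫_ℝ ≤ ⟪m, X⟫_ℝ} :=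
    convexHull_min (fun y hy => by simpa [inner_sub_left] using hle y hy)
      (convex_halfSpace_le (isBoundedBilinearMap_inner.isBoundedLinearMap_left X).toIsLinearMap _)
  have : ⟪m + t • X, X⟫_ℝ ≤ ⟪m, X⟫_ℝ := hhalf hts
  rw [inner_add_left, real_inner_smul_left] at this
  have : 0 < ⟪X, X⟫_ℝ := real_inner_self_pos.2 hX0
  nlinarith

end ConvexGeometry

section ExpSum

variable {ι E : Type*} [NormedAddCommGroup E] [InnerProductSpace ℝ E] {s : Finset ι} {v : ι → E}
  {c : ι → ℝ} {L : Submodule ℝ E}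

lemma exists_pos_forall_exists_mul_norm_le_inner [FiniteDimensional ℝ E] (hs : s.Nonempty)
    (hpos : ∀ X ∈ L, X ≠ 0 → ∃ i ∈ s, 0 < ⟪v i, X⟫_ℝ) :
    ∃ k > 0, ∀ X ∈ L, ∃ i ∈ s, k * ‖X‖ ≤ ⟪v i, X⟫_ℝ := by
  have hK : IsCompact ((L : Set E) ∩ Metric.sphere 0 1) :=
    (isCompact_sphere 0 1).inter_left L.closed_of_finiteDimensional
  have hcont : Continuous fun X => s.sup' hs fun i => ⟪v i, X⟫_ℝ := by fun_prop
  obtain ⟨k, hk, hkK⟩ := hK.exists_forall_le' hcont.continuousOn (a := 0) fun X hX => by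
    obtain ⟨i, hi, hiX⟩ := hpos X hX.1 (ne_zero_of_mem_unit_sphere ⟨X, hX.2⟩)
    exact hiX.trans_le (le_sup' (fun i => ⟪v i, X⟫_ℝ) hi)
  refine ⟨k, hk, fun X hX => ?_⟩
  rcases eq_or_ne X 0 with rfl | hX0
  · obtain ⟨i, hi⟩ := hs
    exact ⟨i, hi, by simp⟩
  have hXn : 0 < ‖X‖ := norm_pos_iff.2 hX0
  obtain ⟨i, hi, hieq⟩ := exists_mem_eq_sup' hs fun i => ⟪v i, ‖X‖⁻¹ • X⟫_ℝ
  have hle := hkK (‖X‖⁻¹ • X) ⟨L.smul_mem _ hX, by simp [norm_smul, hXn.ne']⟩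
  rw [hieq, real_inner_smul_right, le_inv_mul_iff₀ hXn, mul_comm] at hle
  exact ⟨i, hi, hle⟩

lemma exists_isMinOn_sum_mul_exp_inner [FiniteDimensional ℝ E] (hs : s.Nonempty)
    (hc : ∀ i ∈ s, 0 < c i)
    (hpos : ∀ X ∈ L, X ≠ 0 → ∃ i ∈ s, 0 < ⟪v i, X⟫_ℝ) :
    ∃ X₀ ∈ L, IsMinOn (fun X => ∑ i ∈ s, c i * Real.exp ⟪v i, X⟫_ℝ) L X₀ := by
  set F : E → ℝ := fun X => ∑ i ∈ s, c i * Real.exp ⟪v i, X⟫_ℝ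
  obtain ⟨k, hk, hkL⟩ := exists_pos_forall_exists_mul_norm_le_inner hs hpos
  obtain ⟨i₀, hi₀⟩ := exists_mem_eq_inf' hs c
  set c₀ := s.inf' hs c
  have hc₀ : 0 < c₀ := hi₀.2 ▸ hc _ hi₀.1
  have hlow : ∀ X ∈ L, c₀ * Real.exp (k * ‖X‖) ≤ F X := fun X hX => by
    obtain ⟨i, hi, hik⟩ := hkL X hX
    calc c₀ * Real.exp (k * ‖X‖) ≤ c i * Real.exp ⟪v i, X⟫_ℝ :=
          mul_le_mul (inf'_le c hi) (Real.exp_le_exp.2 hik) (Real.exp_pos _).le (hc i hi).le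
      _ ≤ F X := single_le_sum (f := fun j => c j * Real.exp ⟪v j, X⟫_ℝ)
          (fun j hj => (mul_pos (hc j hj) (Real.exp_pos _)).le) hi
  have htend : Tendsto (fun X : E => c₀ * Real.exp (k * ‖X‖)) (cocompact E) atTop :=
    (Real.tendsto_exp_atTop.comp (tendsto_norm_cocompact_atTop.const_mul_atTop hk)).const_mul_atTop
      hc₀
  refine (by fun_prop : Continuous F).continuousOn.exists_isMinOn' L.closed_of_finiteDimensional
    L.zero_mem ?_
  filter_upwards [(htend.eventually_ge_atTop (F 0)).filter_mono inf_le_left,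
    mem_inf_of_right (mem_principal_self (L : Set E))] with X hX hXL
  exact hX.trans (hlow X hXL)

lemma sum_mul_exp_inner_smul_eq_zero_of_isMinOn (hv : ∀ i ∈ s, v i ∈ L) {X₀ : E}
    (hX₀ : X₀ ∈ L) (hmin : IsMinOn (fun X => ∑ i ∈ s, c i * Real.exp ⟪v i, X⟫_ℝ) L X₀) :
    ∑ i ∈ s, (c i * Real.exp ⟪v i, X₀⟫_ℝ) • v i = 0 := by
  set G := ∑ i ∈ s, (c i * Real.exp ⟪v i, X₀⟫_ℝ) • v i
  have hG : G ∈ L := L.sum_mem fun i hi => L.smul_mem _ (hv i hi)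
  -- restricted to the line `X₀ + t • G`, the minimum at `t = 0` has derivative `‖G‖²`
  set φ : ℝ → ℝ := fun t => ∑ i ∈ s, c i * Real.exp (⟪v i, X₀⟫_ℝ + t * ⟪v i, G⟫_ℝ)
  have hφ : HasDerivAt φ (∑ i ∈ s, c i * (Real.exp ⟪v i, X₀⟫_ℝ * ⟪v i, G⟫_ℝ)) 0 :=
    HasDerivAt.fun_sum fun i _ => by
      simpa using
        (((hasDerivAt_mul_const (x := 0) ⟪v i, G⟫_ℝ).const_add ⟪v i, X₀⟫_ℝ).exp).const_mul (c i)
  have hφmin : IsLocalMin φ 0 := Eventually.of_forall fun t => by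
    simpa [φ, inner_add_right, real_inner_smul_right] using
      hmin (L.add_mem hX₀ (L.smul_mem t hG))
  have hGG : ⟪G, G⟫_ℝ = 0 := by
    rw [← hφmin.hasDerivAt_eq_zero hφ, sum_inner]
    refine sum_congr rfl fun i _ => ?_
    rw [real_inner_smul_left]
    ring
  exact inner_self_eq_zero.1 hGG

lemma exists_mem_sum_mul_exp_inner_smul_eq_zero [FiniteDimensional ℝ E] (hc : ∀ i ∈ s, 0 < c i)
    (hv : ∀ i ∈ s, v i ∈ L) (hpos : ∀ X ∈ L, X ≠ 0 → ∃ i ∈ s, 0 < ⟪v i, X⟫_ℝ) :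
    ∃ X ∈ L, ∑ i ∈ s, (c i * Real.exp ⟪v i, X⟫_ℝ) • v i = 0 := by
  rcases s.eq_empty_or_nonempty with rfl | hs
  · exact ⟨0, L.zero_mem, sum_empty⟩
  obtain ⟨X₀, hX₀, hmin⟩ := exists_isMinOn_sum_mul_exp_inner hs hc hpos
  exact ⟨X₀, hX₀, sum_mul_exp_inner_smul_eq_zero_of_isMinOn hv hX₀ hmin⟩

end ExpSum

lemma exists_mem_vectorSpan_sum_mul_exp_inner_smul_sub_eq_zero {E : Type*}
    [NormedAddCommGroup E] [InnerProductSpace ℝ E] [FiniteDimensional ℝ E] {s : Finset E}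
    {c : E → ℝ} {m : E} (hm : m ∈ intrinsicInterior ℝ (convexHull ℝ (s : Set E)))
    (hc : ∀ y ∈ s, 0 < c y) :
    ∃ X ∈ vectorSpan ℝ (s : Set E), ∑ y ∈ s, (c y * Real.exp ⟪y, X⟫_ℝ) • (y - m) = 0 := by
  have hm' : m ∈ affineSpan ℝ (s : Set E) := by
    rw [← affineSpan_convexHull]
    exact subset_affineSpan ℝ _ (intrinsicInterior_subset hm)
  obtain ⟨X, hX, hsum⟩ := exists_mem_sum_mul_exp_inner_smul_eq_zero (v := fun y => y - m) hc
    (fun y hy => vsub_mem_vectorSpan_of_mem_affineSpan_of_mem_affineSpan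
      (subset_affineSpan ℝ _ hy) hm')
    (fun X hX hX0 => exists_inner_sub_pos_of_mem_intrinsicInterior_convexHull hm hX hX0)
  refine ⟨X, hX, ?_⟩
  have hfactor : ∑ y ∈ s, (c y * Real.exp ⟪y - m, X⟫_ℝ) • (y - m)
      = Real.exp (-⟪m, X⟫_ℝ) • ∑ y ∈ s, (c y * Real.exp ⟪y, X⟫_ℝ) • (y - m) := by
    rw [smul_sum]
    refine sum_congr rfl fun y _ => ?_
    rw [smul_smul, inner_sub_left, sub_eq_add_neg, Real.exp_add]
    ring_nf
  rw [hfactor] at hsum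
  exact (smul_eq_zero.1 hsum).resolve_left (Real.exp_pos _).ne'

section OperatorExp

variable {V : Type*} [NormedAddCommGroup V] [NormedSpace ℝ V] [CompleteSpace V]

lemma hasSum_exp_apply (A : V →L[ℝ] V) (v : V) :
    HasSum (fun n => (n.factorial : ℝ)⁻¹ • (A ^ n) v) (NormedSpace.exp A v) := by
  simpa using (NormedSpace.exp_series_hasSum_exp' (𝕂 := ℝ) A).mapL
    (ContinuousLinearMap.apply ℝ V v)

lemma exp_apply_of_apply_eq_smul {A : V →L[ℝ] V} {c : ℝ} {v : V} (h : A v = c • v) :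
    NormedSpace.exp A v = Real.exp c • v := by
  have hpow : ∀ n : ℕ, (A ^ n) v = c ^ n • v := fun n => by
    induction n with
    | zero => simp
    | succ n ih => rw [pow_succ', mul_apply_eq_comp, ih, map_smul, h, smul_smul, ← pow_succ]
  refine (hasSum_exp_apply A v).unique ?_
  simpa [hpow, smul_smul, ← Real.exp_eq_exp_ℝ] using
    (NormedSpace.exp_series_hasSum_exp' (𝕂 := ℝ) c).smul_const v

lemma exp_apply_mem_of_forall_apply_mem {W : Submodule ℝ V} (hW : IsClosed (W : Set V))
    {A : V →L[ℝ] V} (hA : ∀ v ∈ W, A v ∈ W) {v : V} (hv : v ∈ W) : NormedSpace.exp A v ∈ W := by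
  have hpow : ∀ n : ℕ, (A ^ n) v ∈ W := fun n => by
    induction n with
    | zero => simpa using hv
    | succ n ih => rw [pow_succ', mul_apply_eq_comp]; exact hA _ ih
  exact hW.mem_of_tendsto (hasSum_exp_apply A v).tendsto_sum_nat
    (Eventually.of_forall fun n => W.sum_mem fun i _ => W.smul_mem _ (hpow i))

end OperatorExp

section Orthogonal

variable {ι V : Type*} [NormedAddCommGroup V] [InnerProductSpace ℝ V] {s : Finset ι} {u : ι → V}

lemma inner_sum_smul_sum_eq_sum_mul_norm_sq
    (h : (s : Set ι).Pairwise fun i j => ⟪u i, u j⟫_ℝ = 0) (a : ι → ℝ) :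
    ⟪∑ i ∈ s, a i • u i, ∑ j ∈ s, u j⟫_ℝ = ∑ i ∈ s, a i * ‖u i‖ ^ 2 := by
  rw [sum_inner]
  refine sum_congr rfl fun i hi => ?_
  rw [inner_sum, sum_eq_single i (fun j hj hji => by rw [real_inner_smul_left, h hi hj hji.symm,
    mul_zero]) (fun hi' => absurd hi hi'), real_inner_smul_left, real_inner_self_eq_norm_sq]

lemma norm_sum_sq_eq_sum_norm_sq (h : (s : Set ι).Pairwise fun i j => ⟪u i, u j⟫_ℝ = 0) :
    ‖∑ i ∈ s, u i‖ ^ 2 = ∑ i ∈ s, ‖u i‖ ^ 2 := by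
  simpa [real_inner_self_eq_norm_sq] using inner_sum_smul_sum_eq_sum_mul_norm_sq h 1

end Orthogonal

section WeightSpaces

variable {E V : Type*} [NormedAddCommGroup E] [InnerProductSpace ℝ E]
  [NormedAddCommGroup V] [InnerProductSpace ℝ V] {π : E →ₗ[ℝ] V →L[ℝ] V} {𝔞 : Submodule ℝ E}

lemma inner_eq_zero_of_mem_wtSpace (hsa : ∀ X ∈ 𝔞, ∀ v w : V, ⟪(π X) v, w⟫_ℝ = ⟪v, (π X) w⟫_ℝ)
    {α β : E} (hα : α ∈ 𝔞) (hβ : β ∈ 𝔞) (hne : α ≠ β) {v u : V} (hv : v ∈ wtSpace π 𝔞 α)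
    (hu : u ∈ wtSpace π 𝔞 β) : ⟪v, u⟫_ℝ = 0 := by
  have hX : α - β ∈ 𝔞 := 𝔞.sub_mem hα hβ
  have h := hsa _ hX v u
  rw [hv _ hX, hu _ hX, real_inner_smul_left, real_inner_smul_right, ← sub_eq_zero, ← sub_mul,
    ← inner_sub_left] at h
  exact (mul_eq_zero.1 h).resolve_left (inner_self_ne_zero.2 (sub_ne_zero.2 hne))

lemma pairwise_inner_eq_zero_of_mem_wtSpace
    (hsa : ∀ X ∈ 𝔞, ∀ v w : V, ⟪(π X) v, w⟫_ℝ = ⟪v, (π X) w⟫_ℝ) {s : Finset E}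
    (hs : ∀ α ∈ s, α ∈ 𝔞) {u : E → V} (hu : ∀ α ∈ s, u α ∈ wtSpace π 𝔞 α) :
    (s : Set E).Pairwise fun α β => ⟪u α, u β⟫_ℝ = 0 := fun α hα β hβ hne =>
  inner_eq_zero_of_mem_wtSpace hsa (hs α hα) (hs β hβ) hne (hu α hα) (hu β hβ)

lemma apply_sum_of_mem_wtSpace {s : Finset E} {u : E → V} (hu : ∀ α ∈ s, u α ∈ wtSpace π 𝔞 α)
    {X : E} (hX : X ∈ 𝔞) : π X (∑ α ∈ s, u α) = ∑ α ∈ s, ⟪α, X⟫_ℝ • u α := by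
  rw [map_sum]
  exact sum_congr rfl fun α hα => hu α hα X hX

lemma apply_sum_eq_smul_of_mem_wtSpace {s : Finset E} {u : E → V}
    (hu : ∀ α ∈ s, u α ∈ wtSpace π 𝔞 α) {X : E} (hX : X ∈ 𝔞) {r : ℝ}
    (hr : ∀ α ∈ s, ⟪α, X⟫_ℝ = r) : π X (∑ α ∈ s, u α) = r • ∑ α ∈ s, u α := by
  rw [apply_sum_of_mem_wtSpace hu hX, smul_sum]
  exact sum_congr rfl fun α hα => by rw [hr α hα]

lemma exp_apply_sum_of_mem_wtSpace [CompleteSpace V] {s : Finset E} {u : E → V}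
    (hu : ∀ α ∈ s, u α ∈ wtSpace π 𝔞 α) {X : E} (hX : X ∈ 𝔞) :
    NormedSpace.exp (π X) (∑ α ∈ s, u α) = ∑ α ∈ s, Real.exp ⟪α, X⟫_ℝ • u α := by
  rw [map_sum]
  exact sum_congr rfl fun α hα => exp_apply_of_apply_eq_smul (hu α hα X hX)

lemma inner_momentMap [FiniteDimensional ℝ E] (v : V) (Y : E) :
    ⟪momentMap π v, Y⟫_ℝ = ⟪(π Y) v, v⟫_ℝ / ‖v‖ ^ 2 := by
  rw [momentMap, InnerProductSpace.toDual_symm_apply]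
  rfl

lemma momentMap_sum_of_mem_wtSpace [FiniteDimensional ℝ E]
    (hsa : ∀ X ∈ 𝔞, ∀ v w : V, ⟪(π X) v, w⟫_ℝ = ⟪v, (π X) w⟫_ℝ) {s : Finset E}
    (hs : ∀ α ∈ s, α ∈ 𝔞) {u : E → V} (hu : ∀ α ∈ s, u α ∈ wtSpace π 𝔞 α)
    (hm : momentMap π (∑ α ∈ s, u α) ∈ 𝔞) :
    momentMap π (∑ α ∈ s, u α) = (∑ α ∈ s, ‖u α‖ ^ 2)⁻¹ • ∑ α ∈ s, ‖u α‖ ^ 2 • α := by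
  have horth := pairwise_inner_eq_zero_of_mem_wtSpace hsa hs hu
  set b := (∑ α ∈ s, ‖u α‖ ^ 2)⁻¹ • ∑ α ∈ s, ‖u α‖ ^ 2 • α
  have hb : b ∈ 𝔞 := 𝔞.smul_mem _ (𝔞.sum_mem fun α hα => 𝔞.smul_mem _ (hs α hα))
  have hinner : ∀ Y ∈ 𝔞, ⟪momentMap π (∑ α ∈ s, u α), Y⟫_ℝ = ⟪b, Y⟫_ℝ := fun Y hY => by
    rw [inner_momentMap, apply_sum_of_mem_wtSpace hu hY,
      inner_sum_smul_sum_eq_sum_mul_norm_sq horth, norm_sum_sq_eq_sum_norm_sq horth,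
      real_inner_smul_left, sum_inner, div_eq_inv_mul]
    simp_rw [real_inner_smul_left, mul_comm]
  have hzero := hinner _ (𝔞.sub_mem hm hb)
  rwa [← sub_eq_zero, ← inner_sub_left, inner_self_eq_zero, sub_eq_zero] at hzero

lemma momentMap_exp_sum_of_mem_wtSpace [FiniteDimensional ℝ E] [FiniteDimensional ℝ V]
    (hsa : ∀ X ∈ 𝔞, ∀ v w : V, ⟪(π X) v, w⟫_ℝ = ⟪v, (π X) w⟫_ℝ) {W : Submodule ℝ V}
    (hW : IsNiceSpace π 𝔞 W) {s : Finset E} (hs : ∀ α ∈ s, α ∈ 𝔞) {u : E → V}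
    (hu : ∀ α ∈ s, u α ∈ wtSpace π 𝔞 α) (hmem : ∑ α ∈ s, u α ∈ W) (h0 : ∑ α ∈ s, u α ≠ 0)
    {X : E} (hX : X ∈ 𝔞) {m : E}
    (hm : ∑ α ∈ s, (‖u α‖ ^ 2 * Real.exp (2 * ⟪α, X⟫_ℝ)) • (α - m) = 0) :
    momentMap π (NormedSpace.exp (π X) (∑ α ∈ s, u α)) = m := by
  set u' : E → V := fun α => Real.exp ⟪α, X⟫_ℝ • u α
  have hu' : ∀ α ∈ s, u' α ∈ wtSpace π 𝔞 α := fun α hα => (wtSpace π 𝔞 α).smul_mem _ (hu α hα)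
  have hnorm : ∀ α, ‖u' α‖ ^ 2 = ‖u α‖ ^ 2 * Real.exp (2 * ⟪α, X⟫_ℝ) := fun α => by
    rw [norm_smul, mul_pow, Real.norm_of_nonneg (Real.exp_pos _).le, ← Real.exp_nat_mul]
    push_cast
    ring
  have hS : 0 < ∑ α ∈ s, ‖u' α‖ ^ 2 := by
    refine (sum_nonneg fun α _ => by positivity).lt_of_ne (Ne.symm fun h => h0 ?_)
    rw [sum_eq_zero_iff_of_nonneg fun α _ => by positivity] at h
    exact sum_eq_zero fun α hα => by simpa [u', Real.exp_ne_zero] using h α hα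
  have hne : NormedSpace.exp (π X) (∑ α ∈ s, u α) ≠ 0 := fun h => by
    have := norm_sum_sq_eq_sum_norm_sq (pairwise_inner_eq_zero_of_mem_wtSpace hsa hs hu')
    rw [← exp_apply_sum_of_mem_wtSpace hu hX, h, norm_zero] at this
    linarith
  have hnice := hW.2 _ (exp_apply_mem_of_forall_apply_mem W.closed_of_finiteDimensional
    (hW.1 X hX) hmem) hne
  rw [exp_apply_sum_of_mem_wtSpace hu hX] at hnice ⊢
  rw [momentMap_sum_of_mem_wtSpace hsa hs hu' hnice, inv_smul_eq_iff₀ hS.ne', ← sub_eq_zero,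
    sum_smul, ← sum_sub_distrib]
  simpa only [hnorm, ← smul_sub] using hm

end WeightSpaces

theorem distinguished_of_mcc_mem_intrinsicInterior_general
    {𝔤 V : Type*} [NormedAddCommGroup 𝔤] [InnerProductSpace ℝ 𝔤] [FiniteDimensional ℝ 𝔤]
    [NormedAddCommGroup V] [InnerProductSpace ℝ V] [FiniteDimensional ℝ V]
    (π : 𝔤 →ₗ[ℝ] V →L[ℝ] V)
    -- `𝔞` is an abelian subalgebra acting by self-adjoint operators:
    (𝔞 : Submodule ℝ 𝔤)
    (hsa : ∀ X ∈ 𝔞, ∀ v w : V, ⟪(π X) v, w⟫_ℝ = ⟪v, (π X) w⟫_ℝ)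
    -- roots and weights:
    (ΔV : Finset 𝔤) (hΔV : ∀ α ∈ ΔV, α ∈ 𝔞)
    (W : Submodule ℝ V) (hW : IsNiceSpace π 𝔞 W)
    (w : V) (hw : w ∈ W) (hw0 : w ≠ 0)
    -- `cc α` is the component of `w` in the weight space `V_α`:
    (cc : 𝔤 → V) (hcc : ∀ α ∈ ΔV, cc α ∈ wtSpace π 𝔞 α) (hwsum : w = ∑ α ∈ ΔV, cc α)
    (Rw : Finset 𝔤) (hRw : Rw = ΔV.filter fun α => cc α ≠ 0)
    -- `mcc` is the (unique) point of minimal norm in the convex hull of `R(w)`: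
    (mcc : 𝔤)
    (hmcc₂ : ∀ y ∈ convexHull ℝ (Rw : Set 𝔤), ‖mcc‖ ≤ ‖y‖)
    (hint : mcc ∈ intrinsicInterior ℝ (convexHull ℝ (Rw : Set 𝔤)))
    :
    ∃ X ∈ 𝔞, momentMap π ((NormedSpace.exp (π X)) w) = mcc ∧
      (π (momentMap π ((NormedSpace.exp (π X)) w))) ((NormedSpace.exp (π X)) w) =
        (‖mcc‖ ^ 2) • (NormedSpace.exp (π X)) w := by
  have hmemRw : ∀ α ∈ Rw, α ∈ ΔV ∧ cc α ≠ 0 := fun α hα => mem_filter.1 (hRw ▸ hα)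
  have hRw𝔞 : ∀ α ∈ Rw, α ∈ 𝔞 := fun α hα => hΔV α (hmemRw α hα).1
  have hccRw : ∀ α ∈ Rw, cc α ∈ wtSpace π 𝔞 α := fun α hα => hcc α (hmemRw α hα).1
  have hwRw : w = ∑ α ∈ Rw, cc α := by rw [hwsum, hRw, sum_filter_ne_zero]
  have hmcc𝔞 : mcc ∈ 𝔞 := convexHull_min hRw𝔞 𝔞.convex (intrinsicInterior_subset hint)
  obtain ⟨Y, hY, hbary⟩ := exists_mem_vectorSpan_sum_mul_exp_inner_smul_sub_eq_zero
    (c := fun α => ‖cc α‖ ^ 2) hint fun α hα => pow_pos (norm_pos_iff.2 (hmemRw α hα).2) 2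
  have hY𝔞 : Y ∈ 𝔞 := by
    refine (Submodule.span_le.2 ?_ : vectorSpan ℝ (Rw : Set 𝔤) ≤ 𝔞) hY
    rintro _ ⟨a, ha, b, hb, rfl⟩
    exact 𝔞.sub_mem (hRw𝔞 a ha) (hRw𝔞 b hb)
  -- halving `Y` because the masses in the moment map are the squared norms of the components
  set X : 𝔤 := (2 : ℝ)⁻¹ • Y
  have hX𝔞 : X ∈ 𝔞 := 𝔞.smul_mem _ hY𝔞
  have hmoment : momentMap π (NormedSpace.exp (π X) w) = mcc := by
    rw [hwRw] at hw hw0 ⊢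
    refine momentMap_exp_sum_of_mem_wtSpace hsa hW hRw𝔞 hccRw hw hw0 hX𝔞 ?_
    simpa only [X, real_inner_smul_right, mul_inv_cancel_left₀ (two_ne_zero (α := ℝ))] using hbary
  refine ⟨X, hX𝔞, hmoment, ?_⟩
  rw [hmoment, hwRw, exp_apply_sum_of_mem_wtSpace hccRw hX𝔞]
  refine apply_sum_eq_smul_of_mem_wtSpace (fun α hα => (wtSpace π 𝔞 α).smul_mem _ (hccRw α hα))
    hmcc𝔞 fun α hα => ?_
  have hcrit := inner_sub_eq_zero_of_mem_intrinsicInterior_of_forall_norm_le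
    (convex_convexHull ℝ _) hint hmcc₂ (subset_convexHull ℝ _ hα)
  rwa [inner_sub_left, real_inner_self_eq_norm_sq, sub_eq_zero] at hcrit

/-- if `W` is a nice space, `w ∈ W∖{0}` and `mcc(R(w))` lies in the intrinsic
interior of the convex hull of `R(w)`, then there is `X ∈ 𝔞` such that `w̃ = exp(π X)w`
satisfies `m_𝔤(w̃) = mcc(R(w))` and `π(m_𝔤(w̃))w̃ = ‖mcc(R(w))‖²w̃`; in particular the
orbit of `w` contains a critical point of the norm squared of the moment map. -/
theorem distinguished_of_mcc_mem_intrinsicInterior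
    {𝔤 V : Type*} [NormedAddCommGroup 𝔤] [InnerProductSpace ℝ 𝔤] [FiniteDimensional ℝ 𝔤]
    [NormedAddCommGroup V] [InnerProductSpace ℝ V] [FiniteDimensional ℝ V]
    -- the Lie bracket of `𝔤` and the representation `π : 𝔤 → 𝔤𝔩(V)`:
    (bk : 𝔤 →ₗ[ℝ] 𝔤 →ₗ[ℝ] 𝔤)
    (hbk_alt : ∀ X : 𝔤, bk X X = 0)
    (hbk_jac : ∀ X Y Z : 𝔤, bk X (bk Y Z) + bk Y (bk Z X) + bk Z (bk X Y) = 0)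
    (π : 𝔤 →ₗ[ℝ] V →L[ℝ] V)
    (hrep : ∀ X Y : 𝔤, π (bk X Y) = π X * π Y - π Y * π X)
    -- `𝔞` is an abelian subalgebra acting by self-adjoint operators:
    (𝔞 : Submodule ℝ 𝔤)
    (hab : ∀ X ∈ 𝔞, ∀ Y ∈ 𝔞, bk X Y = 0)
    (hsa : ∀ X ∈ 𝔞, ∀ v w : V, ⟪(π X) v, w⟫_ℝ = ⟪v, (π X) w⟫_ℝ)
    -- roots and weights:
    (Δ𝔤 : Finset 𝔤) (hΔ𝔤 : ∀ γ ∈ Δ𝔤, γ ∈ 𝔞 ∧ γ ≠ 0)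
    (ΔV : Finset 𝔤) (hΔV : ∀ α ∈ ΔV, α ∈ 𝔞)
    -- `𝔤₀ = 𝔞 ⊕ 𝔪` is the centralizer of `𝔞`, `π` is skew-adjoint on `𝔪`:
    (𝔪 : Submodule ℝ 𝔤)
    (hskew : ∀ Y ∈ 𝔪, ∀ v w : V, ⟪(π Y) v, w⟫_ℝ = -⟪v, (π Y) w⟫_ℝ)
    (h𝔞𝔪 : ∀ X ∈ 𝔞, ∀ Y ∈ 𝔪, ⟪X, Y⟫_ℝ = 0)
    (h𝔤₀ : ∀ Z : 𝔤, (∀ X ∈ 𝔞, bk X Z = 0) ↔ Z ∈ 𝔞 ⊔ 𝔪)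
    -- the orthogonal restricted-root space decomposition of `𝔤`:
    (h𝔤dec : (𝔞 ⊔ 𝔪) ⊔ (⨆ γ ∈ Δ𝔤, rootSpace bk 𝔞 γ) = ⊤)
    (h𝔤orth : ∀ γ ∈ Δ𝔤, ∀ Y ∈ rootSpace bk 𝔞 γ, ∀ Z : 𝔤,
      (Z ∈ 𝔞 ⊔ 𝔪 ∨ ∃ γ' ∈ Δ𝔤, γ' ≠ γ ∧ Z ∈ rootSpace bk 𝔞 γ') → ⟪Y, Z⟫_ℝ = 0)
    -- the weight space decomposition of `V`:
    (hVdec : (⨆ α ∈ ΔV, wtSpace π 𝔞 α) = ⊤)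
    (W : Submodule ℝ V) (hW : IsNiceSpace π 𝔞 W)
    (w : V) (hw : w ∈ W) (hw0 : w ≠ 0)
    -- `cc α` is the component of `w` in the weight space `V_α`:
    (cc : 𝔤 → V) (hcc : ∀ α ∈ ΔV, cc α ∈ wtSpace π 𝔞 α) (hwsum : w = ∑ α ∈ ΔV, cc α)
    (Rw : Finset 𝔤) (hRw : Rw = ΔV.filter fun α => cc α ≠ 0)
    -- `mcc` is the (unique) point of minimal norm in the convex hull of `R(w)`:
    (mcc : 𝔤) (hmcc₁ : mcc ∈ convexHull ℝ (Rw : Set 𝔤))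
    (hmcc₂ : ∀ y ∈ convexHull ℝ (Rw : Set 𝔤), ‖mcc‖ ≤ ‖y‖)
    (hint : mcc ∈ intrinsicInterior ℝ (convexHull ℝ (Rw : Set 𝔤)))
    :
    ∃ X ∈ 𝔞, momentMap π ((NormedSpace.exp (π X)) w) = mcc ∧
      (π (momentMap π ((NormedSpace.exp (π X)) w))) ((NormedSpace.exp (π X)) w) =
        (‖mcc‖ ^ 2) • (NormedSpace.exp (π X)) w :=
  distinguished_of_mcc_mem_intrinsicInterior_general π 𝔞 hsa ΔV hΔV W hW w hw hw0 cc hcc hwsum Rw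
    hRw mcc hmcc₂ hint
end

section
/- Let v ∈ V be nonzero and suppose the function X ↦ ‖m_𝔞(exp(π(X))v)‖² attains its infimum over 𝔞, i.e., there exists X₀ ∈ 𝔞 with ‖m_𝔞(exp(π(X₀))v)‖ ≤ ‖m_𝔞(exp(π(X))v)‖ for all X ∈ 𝔞. Then mcc(R(v)) lies in the intrinsic interior of the convex hull of R(v), and m_𝔞(exp(π(X₀))v) = mcc(R(v)). -/
/-! Writing `v = ∑ c α` over `R(v)`, the moment map of `exp (π X) v` is the barycentre of `R(v)`
with the positive weights `exp (2 ⟪α, X⟫) ‖c α‖²`, so it lies in the intrinsic interior of the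
convex hull. At a minimiser `X₀`, with `m₀ = m(exp (π X₀) v)`, the derivative of
`t ↦ ‖m(exp (π (X₀ + t m₀)) v)‖²` at `0` is a positive multiple of the weighted variance of
`α ↦ ⟪α, m₀⟫`, so `R(v)` and its hull lie in the hyperplane `⟪·, m₀⟫ = ‖m₀‖²`. This hyperplane
meets the closed ball of radius `‖m₀‖` only in `m₀`, hence `m₀` is the point of minimal norm of
the hull. -/

open scoped InnerProductSpace
open Finset
open scoped Classical

theorem NormedSpace.exp_apply_of_apply_eq_smul {V : Type*} [NormedAddCommGroup V]
    [NormedSpace ℝ V] [CompleteSpace V] {A : V →L[ℝ] V} {u : V} {r : ℝ} (hu : A u = r • u) :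
    NormedSpace.exp A u = Real.exp r • u := by
  have hpow : ∀ n : ℕ, (A ^ n) u = r ^ n • u := fun n => by
    induction n with
    | zero => simp
    | succ n ih =>
      rw [pow_succ', ContinuousLinearMap.mul_def, ContinuousLinearMap.comp_apply, ih, map_smul,
        hu, smul_smul, pow_succ]
  have hA := (exp_series_hasSum_exp' (𝕂 := ℝ) A).mapL (ContinuousLinearMap.apply ℝ V u)
  have hr := (exp_series_hasSum_exp' (𝕂 := ℝ) r).smul_const u
  simp only [ContinuousLinearMap.apply_apply, FunLike.coe_smul, Pi.smul_apply, hpow, smul_smul,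
    smul_eq_mul] at hA hr
  rw [Real.exp_eq_exp_ℝ]
  exact hA.unique hr

theorem mem_intrinsicInterior_iff_exists_isOpen {𝕜 V : Type*} [Ring 𝕜] [AddCommGroup V]
    [Module 𝕜 V] [TopologicalSpace V] {s : Set V} {x : V} :
    x ∈ intrinsicInterior 𝕜 s ↔
      ∃ U : Set V, IsOpen U ∧ x ∈ U ∩ affineSpan 𝕜 s ∧ U ∩ affineSpan 𝕜 s ⊆ s := by
  simp only [mem_intrinsicInterior, mem_interior, isOpen_induced_iff]
  constructor
  · rintro ⟨y, ⟨_, hts, ⟨U, hU, rfl⟩, hyU⟩, rfl⟩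
    exact ⟨U, hU, ⟨hyU, y.2⟩, fun z hz => hts (a := ⟨z, hz.2⟩) hz.1⟩
  · rintro ⟨U, hU, hxU, hUs⟩
    exact ⟨⟨x, hxU.2⟩, ⟨_, fun z hz => hUs ⟨hz, z.2⟩, ⟨U, hU, rfl⟩, hxU.1⟩, rfl⟩

/-- The homothety with centre `y` and ratio `a` is an open map preserving `affineSpan ℝ s`, and
it maps `s` into itself; so it carries a relatively open neighbourhood of `x` in `s` to one of
`a • x + b • y`. -/
theorem Convex.combo_intrinsicInterior_self_mem_intrinsicInterior {V : Type*}
    [AddCommGroup V] [Module ℝ V] [TopologicalSpace V] [IsTopologicalAddGroup V]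
    [ContinuousConstSMul ℝ V] {s : Set V} (hs : Convex ℝ s) {x y : V}
    (hx : x ∈ intrinsicInterior ℝ s) (hy : y ∈ s) {a b : ℝ} (ha : 0 < a) (hb : 0 ≤ b)
    (hab : a + b = 1) : a • x + b • y ∈ intrinsicInterior ℝ s := by
  obtain ⟨U, hU, hxU, hUs⟩ := mem_intrinsicInterior_iff_exists_isOpen.1 hx
  have hH : ∀ z, AffineMap.homothety y a z = a • z + b • y := fun z => by
    rw [AffineMap.homothety_apply, vsub_eq_sub, vadd_eq_add, eq_sub_of_add_eq' hab]
    module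
  have hyA : y ∈ affineSpan ℝ s := subset_affineSpan ℝ s hy
  refine mem_intrinsicInterior_iff_exists_isOpen.2 ⟨AffineMap.homothety y a '' U,
    AffineMap.homothety_isOpenMap y a ha.ne' U hU, ⟨⟨x, hxU.1, hH x⟩, ?_⟩, ?_⟩
  · rw [← hH, AffineMap.homothety_eq_lineMap]
    exact AffineMap.lineMap_mem _ hyA hxU.2
  · rintro _ ⟨⟨z, hzU, rfl⟩, hzA⟩
    have hz : z ∈ affineSpan ℝ s := by
      have := AffineMap.lineMap_mem a⁻¹ hyA hzA
      rwa [← AffineMap.homothety_eq_lineMap, ← AffineMap.homothety_mul_apply,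
        inv_mul_cancel₀ ha.ne', AffineMap.homothety_one, AffineMap.id_apply] at this
    rw [hH]
    exact hs (hUs ⟨hzU, hz⟩) hy ha.le hb hab

theorem Finset.centerMass_mem_intrinsicInterior_convexHull {E : Type*} [NormedAddCommGroup E]
    [NormedSpace ℝ E] [FiniteDimensional ℝ E] {s : Finset E} (hs : s.Nonempty) {w : E → ℝ}
    (hw : ∀ α ∈ s, 0 < w α) :
    s.centerMass w id ∈ intrinsicInterior ℝ (convexHull ℝ (s : Set E)) := by
  obtain ⟨z, hz⟩ := (hs.to_set.convexHull (𝕜 := ℝ)).intrinsicInterior (convex_convexHull ℝ _)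
  obtain ⟨q, hq₀, hq₁, rfl⟩ := Finset.mem_convexHull.1 (intrinsicInterior_subset hz)
  set W := ∑ α ∈ s, w α with hW_def
  have hW : 0 < W := sum_pos hw hs
  -- Peel off a small multiple `ε • z` of the interior point `z`; what is left stays in the hull.
  set ε := min (s.inf' hs w) (W / 2)
  have hε : 0 < ε := lt_min ((lt_inf'_iff hs).2 hw) (half_pos hW)
  have hεq : ∀ α ∈ s, ε * q α ≤ w α := fun α hα => calc
    ε * q α ≤ ε * 1 := by gcongr; exact hq₁ ▸ single_le_sum hq₀ hα
    _ ≤ w α := by rw [mul_one]; exact (min_le_left _ _).trans (inf'_le w hα)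
  have hεW : ε < W := (min_le_right _ _).trans_lt (half_lt_self hW)
  have hrest : s.centerMass (fun α => w α - ε * q α) id ∈ convexHull ℝ (s : Set E) :=
    s.centerMass_id_mem_convexHull (fun α hα => sub_nonneg.2 (hεq α hα))
      (by rw [sum_sub_distrib, ← mul_sum, hq₁, mul_one]; linarith)
  convert (convex_convexHull ℝ _).combo_intrinsicInterior_self_mem_intrinsicInterior hz hrest
    (div_pos hε hW) (sub_nonneg.2 ((div_le_one hW).2 hεW.le)) (add_sub_cancel _ _) using 1
  have hcoeff : (1 - ε / W) * (W - ε)⁻¹ = W⁻¹ := by field_simp [(sub_pos.2 hεW).ne']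
  simp only [centerMass, id, sum_sub_distrib, ← mul_sum, hq₁, mul_one, inv_one, one_smul,
    ← hW_def]
  rw [smul_smul, hcoeff]
  simp only [sub_smul, sum_sub_distrib, mul_smul, ← smul_sum]
  module

theorem eq_of_sum_mul_sq_eq {ι : Type*} {s : Finset ι} {w a : ι → ℝ} {μ : ℝ}
    (hw : ∀ i ∈ s, 0 < w i) (h₁ : ∑ i ∈ s, w i * a i = μ * ∑ i ∈ s, w i)
    (h₂ : ∑ i ∈ s, w i * a i ^ 2 = μ * ∑ i ∈ s, w i * a i) {i : ι} (hi : i ∈ s) : a i = μ := by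
  have hvar : ∑ j ∈ s, w j * (a j - μ) ^ 2 = 0 := by
    have : ∀ j, w j * (a j - μ) ^ 2 = w j * a j ^ 2 - 2 * μ * (w j * a j) + μ ^ 2 * w j :=
      fun j => by ring
    simp only [this, sum_add_distrib, sum_sub_distrib, ← mul_sum, h₂, h₁]
    ring
  have := (sum_eq_zero_iff_of_nonneg fun j hj => by have := hw j hj; positivity).1 hvar i hi
  rwa [mul_eq_zero, or_iff_right (hw i hi).ne', sq_eq_zero_iff, sub_eq_zero] at this

theorem inner_eq_norm_sq_of_norm_centerMass_le {E : Type*} [NormedAddCommGroup E]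
    [InnerProductSpace ℝ E] {s : Finset E} {w : E → ℝ} (hw : ∀ α ∈ s, 0 < w α)
    (hmin : ∀ t : ℝ, ‖s.centerMass w id‖ ≤
      ‖s.centerMass (fun α => w α * Real.exp (t * ⟪α, s.centerMass w id⟫_ℝ)) id‖)
    {α : E} (hα : α ∈ s) : ⟪α, s.centerMass w id⟫_ℝ = ‖s.centerMass w id‖ ^ 2 := by
  set m := s.centerMass w id
  set Z : ℝ → ℝ := fun t => ∑ α ∈ s, w α * Real.exp (t * ⟪α, m⟫_ℝ)
  set F : ℝ → E := fun t => ∑ α ∈ s, (w α * Real.exp (t * ⟪α, m⟫_ℝ)) • α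
  have hZ : ∀ t, 0 < Z t := fun t =>
    sum_pos (fun β hβ => mul_pos (hw β hβ) (Real.exp_pos _)) ⟨α, hα⟩
  have hZ₀ : Z 0 = ∑ α ∈ s, w α := by simp [Z]
  have hF₀ : F 0 = Z 0 • m := by
    simp only [hZ₀, m, centerMass, id, smul_inv_smul₀ (hZ₀ ▸ (hZ 0).ne')]
    simp [F]
  -- `‖F t‖² - ‖m‖² (Z t)²` is nonnegative and vanishes at `0`, so its derivative vanishes there.
  have hlocmin : IsLocalMin (fun t => ‖F t‖ ^ 2 - ‖m‖ ^ 2 * Z t ^ 2) 0 := by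
    refine Filter.Eventually.of_forall fun t => ?_
    have h : ‖m‖ * Z t ≤ ‖F t‖ := by
      have := hmin t
      rwa [centerMass, norm_smul, norm_inv, Real.norm_of_nonneg (hZ t).le, inv_mul_eq_div,
        le_div_iff₀ (hZ t)] at this
    simp only [hF₀, norm_smul, Real.norm_of_nonneg (hZ 0).le, mul_pow, mul_comm (Z 0 ^ 2),
      sub_self]
    rw [sub_nonneg, ← mul_pow]
    exact pow_le_pow_left₀ (mul_nonneg (norm_nonneg _) (hZ t).le) h 2
  have hexp : ∀ a : ℝ, HasDerivAt (fun t => Real.exp (t * a)) a 0 := fun a => by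
    simpa using ((hasDerivAt_id (0 : ℝ)).mul_const a).exp
  have hderZ : HasDerivAt Z (∑ α ∈ s, w α * ⟪α, m⟫_ℝ) 0 :=
    HasDerivAt.fun_sum fun β _ => (hexp _).const_mul (w β)
  have hderF : HasDerivAt F (∑ α ∈ s, (w α * ⟪α, m⟫_ℝ) • α) 0 :=
    HasDerivAt.fun_sum fun β _ => ((hexp _).const_mul (w β)).smul_const β
  have hcrit := hlocmin.hasDerivAt_eq_zero (hderF.norm_sq.sub ((hderZ.pow 2).const_mul _))
  have h₁ : ∑ α ∈ s, w α * ⟪α, m⟫_ℝ = ‖m‖ ^ 2 * ∑ α ∈ s, w α := calc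
    _ = ⟪F 0, m⟫_ℝ := by simp [F, sum_inner, real_inner_smul_left]
    _ = _ := by rw [hF₀, real_inner_smul_left, real_inner_self_eq_norm_sq, hZ₀, mul_comm]
  have h₂ : ∑ α ∈ s, w α * ⟪α, m⟫_ℝ ^ 2 = ‖m‖ ^ 2 * ∑ α ∈ s, w α * ⟪α, m⟫_ℝ := by
    have hsq : ⟪m, ∑ α ∈ s, (w α * ⟪α, m⟫_ℝ) • α⟫_ℝ = ∑ α ∈ s, w α * ⟪α, m⟫_ℝ ^ 2 := by
      simp only [inner_sum, real_inner_smul_right]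
      exact sum_congr rfl fun β _ => by rw [real_inner_comm]; ring
    rw [hF₀, real_inner_smul_left, hsq] at hcrit
    refine mul_left_cancel₀ (mul_ne_zero two_ne_zero (hZ 0).ne') ?_
    linear_combination (norm := ring_nf) hcrit
  exact eq_of_sum_mul_sq_eq hw h₁ h₂ hα

theorem eq_of_inner_eq_norm_sq_of_norm_le {E : Type*} [NormedAddCommGroup E]
    [InnerProductSpace ℝ E] {x m : E} (hx : ⟪x, m⟫_ℝ = ‖m‖ ^ 2) (hle : ‖x‖ ≤ ‖m‖) : x = m := by
  have h : ‖x - m‖ ^ 2 ≤ 0 := by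
    rw [norm_sub_sq_real, hx]
    nlinarith [norm_nonneg x]
  simpa [sub_eq_zero] using le_antisymm h (sq_nonneg _)

section WeightVectors

variable {𝔞 V : Type*} [NormedAddCommGroup 𝔞] [InnerProductSpace ℝ 𝔞]
  [NormedAddCommGroup V] [InnerProductSpace ℝ V] (π : 𝔞 →ₗ[ℝ] V →L[ℝ] V)

def IsWeightVector (α : 𝔞) (u : V) : Prop := ∀ X : 𝔞, π X u = ⟪α, X⟫_ℝ • u

variable {π}

theorem IsWeightVector.smul {α : 𝔞} {u : V} (hu : IsWeightVector π α u) (r : ℝ) :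
    IsWeightVector π α (r • u) := fun X => by rw [map_smul, hu, smul_comm]

theorem IsWeightVector.inner_eq_zero (hsa : ∀ X : 𝔞, (π X : V →ₗ[ℝ] V).IsSymmetric)
    {α β : 𝔞} {u w : V} (hu : IsWeightVector π α u) (hw : IsWeightVector π β w)
    (hαβ : α ≠ β) : ⟪u, w⟫_ℝ = 0 := by
  have h : ⟪π (α - β) u, w⟫_ℝ = ⟪u, π (α - β) w⟫_ℝ := hsa (α - β) u w
  rw [hu, hw, real_inner_smul_left, real_inner_smul_right, ← sub_eq_zero, ← sub_mul,
    ← inner_sub_left, real_inner_self_eq_norm_sq] at h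
  exact (mul_eq_zero.1 h).resolve_left (pow_ne_zero 2 (norm_sub_pos_iff.2 hαβ).ne')

theorem inner_sum_weightVectors (hsa : ∀ X : 𝔞, (π X : V →ₗ[ℝ] V).IsSymmetric)
    {s : Finset 𝔞} {c d : 𝔞 → V} (hc : ∀ α ∈ s, IsWeightVector π α (c α))
    (hd : ∀ α ∈ s, IsWeightVector π α (d α)) :
    ⟪∑ α ∈ s, c α, ∑ β ∈ s, d β⟫_ℝ = ∑ α ∈ s, ⟪c α, d α⟫_ℝ := by
  simp only [sum_inner, inner_sum]
  refine sum_congr rfl fun α hα => sum_eq_single α (fun β hβ hβα => ?_) (absurd hα)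
  exact (hc β hβ).inner_eq_zero hsa (hd α hα) hβα

theorem momentMap_inner [FiniteDimensional ℝ 𝔞] (u : V) (X : 𝔞) :
    ⟪momentMap π u, X⟫_ℝ = ⟪π X u, u⟫_ℝ / ‖u‖ ^ 2 := by
  rw [momentMap, InnerProductSpace.toDual_symm_apply]
  rfl

theorem momentMap_sum_weightVectors [FiniteDimensional ℝ 𝔞]
    (hsa : ∀ X : 𝔞, (π X : V →ₗ[ℝ] V).IsSymmetric)
    {s : Finset 𝔞} {c : 𝔞 → V} (hc : ∀ α ∈ s, IsWeightVector π α (c α)) :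
    momentMap π (∑ α ∈ s, c α) = s.centerMass (fun α => ‖c α‖ ^ 2) id := by
  refine ext_inner_right ℝ fun X => ?_
  have hπX : π X (∑ α ∈ s, c α) = ∑ α ∈ s, ⟪α, X⟫_ℝ • c α := by
    rw [map_sum]; exact sum_congr rfl fun α hα => hc α hα X
  rw [momentMap_inner, hπX, ← real_inner_self_eq_norm_sq,
    inner_sum_weightVectors hsa (fun α hα => (hc α hα).smul _) hc,
    inner_sum_weightVectors hsa hc hc, centerMass, real_inner_smul_left, sum_inner,
    div_eq_inv_mul]
  simp only [real_inner_smul_left, real_inner_self_eq_norm_sq, id, mul_comm]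

theorem momentMap_exp_apply_sum_weightVectors [FiniteDimensional ℝ 𝔞] [CompleteSpace V]
    (hsa : ∀ X : 𝔞, (π X : V →ₗ[ℝ] V).IsSymmetric)
    {s : Finset 𝔞} {c : 𝔞 → V} (hc : ∀ α ∈ s, IsWeightVector π α (c α)) (X : 𝔞) :
    momentMap π (NormedSpace.exp (π X) (∑ α ∈ s, c α)) =
      s.centerMass (fun α => Real.exp (2 * ⟪α, X⟫_ℝ) * ‖c α‖ ^ 2) id := by
  have hexp : NormedSpace.exp (π X) (∑ α ∈ s, c α) = ∑ α ∈ s, Real.exp ⟪α, X⟫_ℝ • c α := by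
    rw [map_sum]
    exact sum_congr rfl fun α hα => NormedSpace.exp_apply_of_apply_eq_smul (hc α hα X)
  rw [hexp, momentMap_sum_weightVectors hsa fun α hα => (hc α hα).smul _]
  simp only [norm_smul, mul_pow, Real.norm_eq_abs, sq_abs, ← Real.exp_nat_mul]
  push_cast
  rfl

theorem inner_momentMap_eq_norm_sq_of_forall_norm_le [FiniteDimensional ℝ 𝔞] [CompleteSpace V]
    (hsa : ∀ X : 𝔞, (π X : V →ₗ[ℝ] V).IsSymmetric)
    {s : Finset 𝔞} {c : 𝔞 → V} (hc : ∀ α ∈ s, IsWeightVector π α (c α)) {X₀ : 𝔞}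
    (hmin : ∀ X : 𝔞, ‖momentMap π (NormedSpace.exp (π X₀) (∑ α ∈ s, c α))‖ ≤
      ‖momentMap π (NormedSpace.exp (π X) (∑ α ∈ s, c α))‖)
    (hc₀ : ∀ α ∈ s, c α ≠ 0) {α : 𝔞} (hα : α ∈ s) :
    ⟪α, momentMap π (NormedSpace.exp (π X₀) (∑ α ∈ s, c α))⟫_ℝ =
      ‖momentMap π (NormedSpace.exp (π X₀) (∑ α ∈ s, c α))‖ ^ 2 := by
  simp only [momentMap_exp_apply_sum_weightVectors hsa hc] at hmin ⊢
  set m₀ := s.centerMass (fun α => Real.exp (2 * ⟪α, X₀⟫_ℝ) * ‖c α‖ ^ 2) id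
  refine inner_eq_norm_sq_of_norm_centerMass_le
    (fun β hβ => by have := norm_pos_iff.2 (hc₀ β hβ); positivity) (fun t => ?_) hα
  -- Moving from `X₀` to `X₀ + (t / 2) • m₀` multiplies the weights by `exp (t ⟪α, m₀⟫)`.
  convert hmin (X₀ + (t / 2) • m₀) using 4 with β
  rw [inner_add_right, real_inner_smul_right, mul_add, Real.exp_add,
    show 2 * (t / 2 * ⟪β, m₀⟫_ℝ) = t * ⟪β, m₀⟫_ℝ by ring]
  ring

end WeightVectors

theorem momentMap_min_of_attains_inf_general
    {𝔞 V : Type*} [NormedAddCommGroup 𝔞] [InnerProductSpace ℝ 𝔞] [FiniteDimensional ℝ 𝔞]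
    [NormedAddCommGroup V] [InnerProductSpace ℝ V] [FiniteDimensional ℝ V]
    (π : 𝔞 →ₗ[ℝ] V →L[ℝ] V)
    (hsa : ∀ X : 𝔞, ∀ v w : V, ⟪(π X) v, w⟫_ℝ = ⟪v, (π X) w⟫_ℝ)
    (ΔV : Finset 𝔞) (v : V)
    -- `c α` is the component of `v` in the weight space `V_α`:
    (c : 𝔞 → V)
    (hc : ∀ α ∈ ΔV, ∀ X : 𝔞, (π X) (c α) = ⟪α, X⟫_ℝ • c α)
    (hsum : v = ∑ α ∈ ΔV, c α)
    (Rv : Finset 𝔞) (hRv : Rv = ΔV.filter fun α => c α ≠ 0)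
    (X₀ : 𝔞)
    (hmin : ∀ X : 𝔞, ‖momentMap π ((NormedSpace.exp (π X₀)) v)‖ ≤
      ‖momentMap π ((NormedSpace.exp (π X)) v)‖)
    -- `mcc` is the (unique) point of minimal norm in the convex hull of `R(v)`:
    (mcc : 𝔞) (hmcc₁ : mcc ∈ convexHull ℝ (Rv : Set 𝔞))
    (hmcc₂ : ∀ y ∈ convexHull ℝ (Rv : Set 𝔞), ‖mcc‖ ≤ ‖y‖) :
    mcc ∈ intrinsicInterior ℝ (convexHull ℝ (Rv : Set 𝔞)) ∧
    momentMap π ((NormedSpace.exp (π X₀)) v) = mcc := by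
  have hmem : ∀ α ∈ Rv, α ∈ ΔV ∧ c α ≠ 0 := fun α hα => by rwa [hRv, mem_filter] at hα
  have hwt : ∀ α ∈ Rv, IsWeightVector π α (c α) := fun α hα => hc α (hmem α hα).1
  have hc₀ : ∀ α ∈ Rv, c α ≠ 0 := fun α hα => (hmem α hα).2
  have hv : v = ∑ α ∈ Rv, c α := by rw [hsum, hRv, sum_filter_ne_zero]
  have hRv_ne : Rv.Nonempty := Finset.coe_nonempty.1 (convexHull_nonempty_iff.1 ⟨mcc, hmcc₁⟩)
  subst hv
  have hint : momentMap π (NormedSpace.exp (π X₀) (∑ α ∈ Rv, c α)) ∈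
      intrinsicInterior ℝ (convexHull ℝ (Rv : Set 𝔞)) := by
    rw [momentMap_exp_apply_sum_weightVectors hsa hwt]
    exact Rv.centerMass_mem_intrinsicInterior_convexHull hRv_ne
      fun α hα => by have := norm_pos_iff.2 (hc₀ α hα); positivity
  set m₀ := momentMap π (NormedSpace.exp (π X₀) (∑ α ∈ Rv, c α))
  have hplane : ∀ α ∈ Rv, ⟪α, m₀⟫_ℝ = ‖m₀‖ ^ 2 := fun α hα =>
    inner_momentMap_eq_norm_sq_of_forall_norm_le hsa hwt hmin hc₀ hα
  have hmcc_plane : ⟪mcc, m₀⟫_ℝ = ‖m₀‖ ^ 2 :=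
    convexHull_min (t := {x | ⟪x, m₀⟫_ℝ = ‖m₀‖ ^ 2}) hplane
      (convex_hyperplane
        ⟨fun x y => inner_add_left x y m₀, fun r x => real_inner_smul_left x m₀ r⟩ _) hmcc₁
  have heq := eq_of_inner_eq_norm_sq_of_norm_le hmcc_plane (hmcc₂ _ (intrinsicInterior_subset hint))
  exact ⟨heq ▸ hint, heq.symm⟩

/-- if `X ↦ ‖m_𝔞(exp(π X)v)‖²` attains its infimum over `𝔞` at `X₀`,
then the minimal convex combination `mcc(R(v))` lies in the intrinsic interior of
the convex hull of `R(v)`, and `m_𝔞(exp(π X₀)v) = mcc(R(v))`. -/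
theorem momentMap_min_of_attains_inf
    {𝔞 V : Type*} [NormedAddCommGroup 𝔞] [InnerProductSpace ℝ 𝔞] [FiniteDimensional ℝ 𝔞]
    [NormedAddCommGroup V] [InnerProductSpace ℝ V] [FiniteDimensional ℝ V]
    (π : 𝔞 →ₗ[ℝ] V →L[ℝ] V)
    (hsa : ∀ X : 𝔞, ∀ v w : V, ⟪(π X) v, w⟫_ℝ = ⟪v, (π X) w⟫_ℝ)
    (hcomm : ∀ X Y : 𝔞, Commute (π X) (π Y))
    (ΔV : Finset 𝔞) (v : V) (hv : v ≠ 0)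
    -- `c α` is the component of `v` in the weight space `V_α`:
    (c : 𝔞 → V)
    (hc : ∀ α ∈ ΔV, ∀ X : 𝔞, (π X) (c α) = ⟪α, X⟫_ℝ • c α)
    (hsum : v = ∑ α ∈ ΔV, c α)
    (Rv : Finset 𝔞) (hRv : Rv = ΔV.filter fun α => c α ≠ 0)
    (X₀ : 𝔞)
    (hmin : ∀ X : 𝔞, ‖momentMap π ((NormedSpace.exp (π X₀)) v)‖ ≤
      ‖momentMap π ((NormedSpace.exp (π X)) v)‖)
    -- `mcc` is the (unique) point of minimal norm in the convex hull of `R(v)`: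
    (mcc : 𝔞) (hmcc₁ : mcc ∈ convexHull ℝ (Rv : Set 𝔞))
    (hmcc₂ : ∀ y ∈ convexHull ℝ (Rv : Set 𝔞), ‖mcc‖ ≤ ‖y‖) :
    mcc ∈ intrinsicInterior ℝ (convexHull ℝ (Rv : Set 𝔞)) ∧
    momentMap π ((NormedSpace.exp (π X₀)) v) = mcc :=
  momentMap_min_of_attains_inf_general π hsa ΔV v c hc hsum Rv hRv X₀ hmin mcc hmcc₁ hmcc₂
end
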